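/- The bracket [(a,λ,μ),(b,λ₁,μ₁)] = ([a,b] + μ·D b − μ₁·D a, ψ(a,b), 0) on 𝔏 × ℂ × ℂ is bilinear over ℂ, alternating, and satisfies the Jacobi identity; i.e., the non-twisted affine Kac-Moody algebra L̂(g) = 𝔏 ⊕ ℂc ⊕ ℂd obtained by adjoining the derivation d = t·d/dt to the central extension is a Lie algebra over ℂ. -/

import Mathlib

noncomputable section

/-- The loop algebra: `N × N` matrices over Laurent polynomials, a Lie ring under the
commutator bracket `⁅a, b⁆ = a * b - b * a`. -/
abbrev Loop (N : ℕ) := Matrix (Fin N) (Fin N) (LaurentPolynomial ℂ)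

/-- The matrix of `n`-th Laurent coefficients of the entries of `a`. -/
def coeffM {N : ℕ} (a : Loop N) (n : ℤ) : Matrix (Fin N) (Fin N) ℂ :=
  fun i j => (a i j).coeff n

/-- The cocycle `ψ(a,b) = Σₙ n · trace(aₙ * b₋ₙ)`, i.e. `Res(tr((da/dt)·b))`. -/
def psi {N : ℕ} (a b : Loop N) : ℂ :=
  ∑ᶠ n : ℤ, (n : ℂ) * Matrix.trace (coeffM a n * coeffM b (-n))

/-- The derivation `D = t·d/dt`, acting on coefficients by `(D a)ₙ = n · aₙ`. -/
def Dmap {N : ℕ} (a : Loop N) : Loop N :=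
  fun i j => AddMonoidAlgebra.ofCoeff (Finsupp.sum (a i j).coeff fun n c => Finsupp.single n ((n : ℂ) * c))

/-- The bracket of the non-twisted affine Kac-Moody algebra $\hat L(g) = 𝔏 ⊕ ℂc ⊕ ℂd$:
`[(a,λ,μ),(b,λ₁,μ₁)] = ([a,b] + μ·D b − μ₁·D a, ψ(a,b), 0)`. -/
def brKM {N : ℕ} (x y : Loop N × ℂ × ℂ) : Loop N × ℂ × ℂ :=
  (⁅x.1, y.1⁆ + x.2.2 • Dmap y.1 - y.2.2 • Dmap x.1, psi x.1 y.1, 0)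

/-!
Adjoining to a Lie algebra `L` a central element `c` through a 2-cocycle `ψ`, and an element `d`
acting by a derivation `D`, gives a Lie algebra as soon as `ψ` is `D`-invariant:
`ψ(Da, b) + ψ(a, Db) = 0`. Here `D = t·d/dt` is an associative derivation of the matrix ring, and
`ψ(a, b) = τ(Da · b)` for the functional `τ` = constant term of the trace, which is cyclic and
vanishes on the image of `D`. Every identity needed for `ψ` is then an instance of
`τ(D(ab)) = 0`.
-/

-- The commutator Lie ring of an associative ring is not a global instance.
attribute [local instance] LieRing.ofAssociativeRing

open LaurentPolynomial

section AffineBracket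

variable {R L : Type*} [CommRing R] [LieRing L] [LieAlgebra R L]
  (D : LieDerivation R L L) (ψ : L →ₗ[R] L →ₗ[R] R)

def affineBracket (x y : L × R × R) : L × R × R :=
  (⁅x.1, y.1⁆ + x.2.2 • D y.1 - y.2.2 • D x.1, ψ x.1 y.1, 0)

lemma affineBracket_add_left (x y z : L × R × R) :
    affineBracket D ψ (x + y) z = affineBracket D ψ x z + affineBracket D ψ y z := by
  ext
  · simp only [affineBracket, Prod.fst_add, Prod.snd_add, add_lie, map_add, add_smul, smul_add]
    abel
  · simp [affineBracket]
  · simp [affineBracket]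

lemma affineBracket_add_right (x y z : L × R × R) :
    affineBracket D ψ x (y + z) = affineBracket D ψ x y + affineBracket D ψ x z := by
  ext
  · simp only [affineBracket, Prod.fst_add, Prod.snd_add, lie_add, map_add, add_smul, smul_add]
    abel
  · simp [affineBracket]
  · simp [affineBracket]

lemma affineBracket_smul_left (c : R) (x y : L × R × R) :
    affineBracket D ψ (c • x) y = c • affineBracket D ψ x y := by
  ext
  · simp only [affineBracket, Prod.smul_fst, Prod.smul_snd, smul_lie, map_smul, smul_sub,
      smul_add, smul_smul, smul_eq_mul]
    module
  · simp [affineBracket]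
  · simp [affineBracket]

lemma affineBracket_smul_right (c : R) (x y : L × R × R) :
    affineBracket D ψ x (c • y) = c • affineBracket D ψ x y := by
  ext
  · simp only [affineBracket, Prod.smul_fst, Prod.smul_snd, lie_smul, map_smul, smul_sub,
      smul_add, smul_smul, smul_eq_mul]
    module
  · simp [affineBracket]
  · simp [affineBracket]

lemma affineBracket_self (hψ : ψ.IsAlt) (x : L × R × R) : affineBracket D ψ x x = 0 := by
  ext
  · simp [affineBracket]
  · exact hψ.self_eq_zero x.1
  · rfl

lemma affineBracket_jacobi (hψ : ψ.IsAlt)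
    (hcocycle : ∀ a b c, ψ a ⁅b, c⁆ + ψ b ⁅c, a⁆ + ψ c ⁅a, b⁆ = 0)
    (hinv : ∀ a b, ψ (D a) b + ψ a (D b) = 0) (x y z : L × R × R) :
    affineBracket D ψ x (affineBracket D ψ y z) + affineBracket D ψ y (affineBracket D ψ z x) +
      affineBracket D ψ z (affineBracket D ψ x y) = 0 := by
  obtain ⟨a, -, r⟩ := x
  obtain ⟨b, -, s⟩ := y
  obtain ⟨c, -, t⟩ := z
  have hsymm (u v : L) : ψ u (D v) = ψ v (D u) := by
    rw [← hψ.neg (D u) v]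
    linear_combination hinv u v
  ext
  · simp only [affineBracket, zero_smul, sub_zero, lie_add, lie_sub, lie_smul, map_add, map_sub,
      map_smul, LieDerivation.apply_lie_eq_add, Prod.fst_add, Prod.fst_zero]
    rw [← lie_skew (D b) c, ← lie_skew (D c) a, ← lie_skew (D a) b]
    linear_combination (norm := module) lie_jacobi a b c
  · simp only [affineBracket, map_add, map_sub, map_smul, smul_eq_mul, Prod.snd_add,
      Prod.fst_add, Prod.snd_zero, Prod.fst_zero]
    linear_combination hcocycle a b c + s * hsymm a c - t * hsymm a b - r * hsymm b c
  · simp [affineBracket]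

end AffineBracket

section TraceCocycle

variable {R A : Type*} [CommRing R] [Ring A] [Algebra R A]

def LieDerivation.ofLeibniz (D : A →ₗ[R] A) (hD : ∀ a b, D (a * b) = D a * b + a * D b) :
    LieDerivation R A A where
  toLinearMap := D
  leibniz' a b := by
    simp only [Ring.lie_def, map_sub, hD]
    abel

variable (D : A →ₗ[R] A) (τ : A →ₗ[R] R)

def traceCocycle : A →ₗ[R] A →ₗ[R] R := (LinearMap.mul R A ∘ₗ D).compr₂ τ

lemma traceCocycle_apply (a b : A) : traceCocycle D τ a b = τ (D a * b) := rfl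

variable {D τ}

lemma trace_derivation_mul_add (hD : ∀ a b, D (a * b) = D a * b + a * D b)
    (hτD : ∀ a, τ (D a) = 0) (a b : A) : τ (D a * b) + τ (a * D b) = 0 := by
  rw [← map_add, ← hD, hτD]

lemma traceCocycle_isAlt [IsAddTorsionFree R] (hD : ∀ a b, D (a * b) = D a * b + a * D b)
    (hτ : ∀ a b, τ (a * b) = τ (b * a)) (hτD : ∀ a, τ (D a) = 0) : (traceCocycle D τ).IsAlt := by
  intro a
  have h := trace_derivation_mul_add hD hτD a a
  rw [hτ a, ← two_nsmul] at h
  exact two_nsmul_eq_zero.mp h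

lemma trace_derivation_mul_cyclic (hD : ∀ a b, D (a * b) = D a * b + a * D b)
    (hτ : ∀ a b, τ (a * b) = τ (b * a)) (hτD : ∀ a, τ (D a) = 0) (a b c : A) :
    τ (D a * (b * c)) + τ (D b * (c * a)) + τ (D c * (a * b)) = 0 := by
  have e₁ : τ (a * (D b * c)) = τ (D b * (c * a)) := by rw [hτ, mul_assoc]
  have e₂ : τ (a * (b * D c)) = τ (D c * (a * b)) := by rw [← mul_assoc, hτ]
  have h := trace_derivation_mul_add hD hτD a (b * c)
  rw [hD, mul_add, map_add, e₁, e₂] at h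
  linear_combination h

lemma traceCocycle_cocycle (hD : ∀ a b, D (a * b) = D a * b + a * D b)
    (hτ : ∀ a b, τ (a * b) = τ (b * a)) (hτD : ∀ a, τ (D a) = 0) (a b c : A) :
    traceCocycle D τ a ⁅b, c⁆ + traceCocycle D τ b ⁅c, a⁆ + traceCocycle D τ c ⁅a, b⁆ = 0 := by
  simp only [traceCocycle_apply, Ring.lie_def, map_sub]
  linear_combination trace_derivation_mul_cyclic hD hτ hτD a b c -
    trace_derivation_mul_cyclic hD hτ hτD a c b

lemma traceCocycle_derivation_add (hD : ∀ a b, D (a * b) = D a * b + a * D b)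
    (hτD : ∀ a, τ (D a) = 0) (a b : A) :
    traceCocycle D τ (D a) b + traceCocycle D τ a (D b) = 0 :=
  trace_derivation_mul_add hD hτD (D a) b

end TraceCocycle

lemma LinearMap.mapMatrix_mul_of_leibniz {R A l m n : Type*} [CommSemiring R] [Semiring A]
    [Module R A] [Fintype m] {d : A →ₗ[R] A} (hd : ∀ a b, d (a * b) = d a * b + a * d b)
    (M : Matrix l m A) (N : Matrix m n A) :
    d.mapMatrix (M * N) = d.mapMatrix M * N + M * d.mapMatrix N := by
  ext i j
  simp [Matrix.mul_apply, map_sum, hd, Finset.sum_add_distrib]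

lemma Finsupp.sum_single_intCast_mul_apply {R : Type*} [Ring R] (f : ℤ →₀ R) (n : ℤ) :
    (f.sum fun m c => single m ((m : R) * c)) n = n * f n := by
  rw [sum_apply, sum_eq_single n] <;> simp +contextual

namespace LaurentPolynomial

variable (R : Type*) [CommRing R]

def eulerDeriv : R[T;T⁻¹] →ₗ[R] R[T;T⁻¹] where
  toFun f := AddMonoidAlgebra.ofCoeff (f.coeff.sum fun n c => Finsupp.single n ((n : R) * c))
  map_add' f g := by
    ext n
    simp only [AddMonoidAlgebra.coeff_add, Finsupp.add_apply,
      Finsupp.sum_single_intCast_mul_apply, mul_add]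
  map_smul' r f := by
    ext n
    simp only [AddMonoidAlgebra.coeff_smul, Finsupp.smul_apply,
      Finsupp.sum_single_intCast_mul_apply, smul_eq_mul, RingHom.id_apply, mul_left_comm]

variable {R}

@[simp]
lemma coeff_eulerDeriv (f : R[T;T⁻¹]) (n : ℤ) : (eulerDeriv R f).coeff n = n * f.coeff n :=
  Finsupp.sum_single_intCast_mul_apply _ _

lemma eulerDeriv_single (n : ℤ) (r : R) :
    eulerDeriv R (AddMonoidAlgebra.single n r) = AddMonoidAlgebra.single n (n * r) := by
  ext m
  simp only [coeff_eulerDeriv, AddMonoidAlgebra.coeff_single, Finsupp.single_apply]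
  split_ifs with h <;> simp [h]

lemma eulerDeriv_mul (f g : R[T;T⁻¹]) :
    eulerDeriv R (f * g) = eulerDeriv R f * g + f * eulerDeriv R g := by
  induction f using AddMonoidAlgebra.induction_linear with
  | zero => simp
  | add f₁ f₂ h₁ h₂ => simp only [add_mul, map_add, h₁, h₂]; abel
  | single p r =>
    induction g using AddMonoidAlgebra.induction_linear with
    | zero => simp
    | add g₁ g₂ h₁ h₂ => simp only [mul_add, map_add, h₁, h₂]; abel
    | single q s =>
      simp only [AddMonoidAlgebra.single_mul_single, eulerDeriv_single,
        ← AddMonoidAlgebra.single_add]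
      congr 1
      push_cast
      ring

lemma coeff_zero_mul (f g : R[T;T⁻¹]) : (f * g).coeff 0 = ∑ᶠ n, f.coeff n * g.coeff (-n) := by
  rw [AddMonoidAlgebra.coeff_mul_apply_left, Finsupp.sum,
    finsum_eq_sum_of_support_subset (s := f.coeff.support) _
      (by simpa using Function.support_mul_subset_left f.coeff fun n => g.coeff (-n))]
  simp

lemma coeff_zero_trace_mul {n : Type*} [Fintype n] (M N : Matrix n n R[T;T⁻¹]) :
    (M * N).trace.coeff 0 = ∑ᶠ m, (M.map (·.coeff m) * N.map (·.coeff (-m))).trace := by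
  have hfin (i k : n) : Function.HasFiniteSupport fun m => (M i k).coeff m * (N k i).coeff (-m) :=
    (M i k).coeff.hasFiniteSupport.mul_left _
  simp only [Matrix.trace, Matrix.diag, Matrix.mul_apply, Matrix.map_apply,
    AddMonoidAlgebra.coeff_sum, Finsupp.coe_finsetSum, Finset.sum_apply, coeff_zero_mul]
  rw [finsum_sum_comm _ _ fun i _ => Function.HasFiniteSupport.sum (fun k => hfin i k) _]
  exact Finset.sum_congr rfl fun i _ => (finsum_sum_comm _ _ fun k _ => hfin i k).symm

variable (n : Type*) [Fintype n] (R)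

def constCoeffTrace : Matrix n n R[T;T⁻¹] →ₗ[R] R :=
  Finsupp.lapply 0 ∘ₗ (AddMonoidAlgebra.coeffLinearEquiv R).toLinearMap ∘ₗ
    Matrix.traceLinearMap n R R[T;T⁻¹]

variable {n R}

lemma constCoeffTrace_apply (M : Matrix n n R[T;T⁻¹]) :
    constCoeffTrace R n M = M.trace.coeff 0 := rfl

lemma constCoeffTrace_mul_comm (M N : Matrix n n R[T;T⁻¹]) :
    constCoeffTrace R n (M * N) = constCoeffTrace R n (N * M) := by
  rw [constCoeffTrace_apply, constCoeffTrace_apply, Matrix.trace_mul_comm]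

lemma constCoeffTrace_mapMatrix_eulerDeriv (M : Matrix n n R[T;T⁻¹]) :
    constCoeffTrace R n ((eulerDeriv R).mapMatrix M) = 0 := by
  rw [constCoeffTrace_apply, LinearMap.mapMatrix_apply, ← AddMonoidHom.map_trace, coeff_eulerDeriv,
    Int.cast_zero, zero_mul]

end LaurentPolynomial

lemma psi_eq_traceCocycle {N : ℕ} (a b : Loop N) :
    psi a b = traceCocycle (eulerDeriv ℂ).mapMatrix (constCoeffTrace ℂ (Fin N)) a b := by
  rw [traceCocycle_apply, constCoeffTrace_apply, coeff_zero_trace_mul, psi]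
  congr 1
  funext n
  have h : ((eulerDeriv ℂ).mapMatrix a).map (·.coeff n) = (n : ℂ) • coeffM a n := by
    ext i j
    simp [coeffM]
  rw [h, Matrix.smul_mul, Matrix.trace_smul, smul_eq_mul]
  rfl

theorem affineKacMoody_isLieAlgebra_general (N : ℕ) :
    (∀ x y z : Loop N × ℂ × ℂ, brKM (x + y) z = brKM x z + brKM y z) ∧
    (∀ (c : ℂ) (x y : Loop N × ℂ × ℂ), brKM (c • x) y = c • brKM x y) ∧
    (∀ x y z : Loop N × ℂ × ℂ, brKM x (y + z) = brKM x y + brKM x z) ∧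
    (∀ (c : ℂ) (x y : Loop N × ℂ × ℂ), brKM x (c • y) = c • brKM x y) ∧
    (∀ x : Loop N × ℂ × ℂ, brKM x x = 0) ∧
    (∀ x y z : Loop N × ℂ × ℂ,
      brKM x (brKM y z) + brKM y (brKM z x) + brKM z (brKM x y) = 0) := by
  set d : Loop N →ₗ[ℂ] Loop N := (eulerDeriv ℂ).mapMatrix
  set τ := constCoeffTrace ℂ (Fin N)
  have hd : ∀ a b, d (a * b) = d a * b + a * d b :=
    LinearMap.mapMatrix_mul_of_leibniz eulerDeriv_mul
  have hτ : ∀ a b, τ (a * b) = τ (b * a) := constCoeffTrace_mul_comm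
  have hτd : ∀ a, τ (d a) = 0 := constCoeffTrace_mapMatrix_eulerDeriv
  set D := LieDerivation.ofLeibniz d hd
  set ψ := traceCocycle d τ
  have hψ : ψ.IsAlt := traceCocycle_isAlt hd hτ hτd
  have hbr : brKM = affineBracket D ψ := by
    funext x y
    rw [brKM, affineBracket, psi_eq_traceCocycle]
    -- `Dmap` is `eulerDeriv ℂ` applied entrywise, definitionally
    rfl
  rw [hbr]
  exact ⟨affineBracket_add_left D ψ, affineBracket_smul_left D ψ, affineBracket_add_right D ψ,
    affineBracket_smul_right D ψ, affineBracket_self D ψ hψ,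
    affineBracket_jacobi D ψ hψ (traceCocycle_cocycle hd hτ hτd)
      (traceCocycle_derivation_add hd hτd)⟩

/-- The affine Kac-Moody algebra $𝔏 ⊕ ℂc ⊕ ℂd$ is a Lie algebra over ℂ: the bracket is
ℂ-bilinear, alternating and satisfies the Jacobi identity. -/
theorem affineKacMoody_isLieAlgebra (N : ℕ) (hN : 0 < N) :
    (∀ x y z : Loop N × ℂ × ℂ, brKM (x + y) z = brKM x z + brKM y z) ∧
    (∀ (c : ℂ) (x y : Loop N × ℂ × ℂ), brKM (c • x) y = c • brKM x y) ∧
    (∀ x y z : Loop N × ℂ × ℂ, brKM x (y + z) = brKM x y + brKM x z) ∧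
    (∀ (c : ℂ) (x y : Loop N × ℂ × ℂ), brKM x (c • y) = c • brKM x y) ∧
    (∀ x : Loop N × ℂ × ℂ, brKM x x = 0) ∧
    (∀ x y z : Loop N × ℂ × ℂ,
      brKM x (brKM y z) + brKM y (brKM z x) + brKM z (brKM x y) = 0) :=
  affineKacMoody_isLieAlgebra_general N
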